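/- Let τ > 0, let μ be a finite signed Borel measure on [−τ,0] and let r_τ be the resolvent of the functional differential equation. If r_τ is integrable on [0,∞), then ∫₀^∞ r_τ(s) ds = −1/μ([−τ,0]) (in particular μ([−τ,0]) ≠ 0) and ∫₀^∞ r_τ'(s) ds = −1. -/

import Mathlib

open MeasureTheory Filter Set
open scoped Topology

/-- Integral of `g` over the set `A` against a finite signed Borel measure `μ`,
defined via the Jordan decomposition. -/
noncomputable def sInt (μ : MeasureTheory.SignedMeasure ℝ) (A : Set ℝ) (g : ℝ → ℝ) : ℝ :=
  (∫ s in A, g s ∂μ.toJordanDecomposition.posPart) -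
    (∫ s in A, g s ∂μ.toJordanDecomposition.negPart)

/-- Shifting a function vanishing on negatives by `u ≤ 0` preserves integrability and the
integral over `[0,∞)`. -/
private lemma shift_int (f : ℝ → ℝ) (hf : Measurable f) (h0 : ∀ t < (0:ℝ), f t = 0)
    (hint : IntegrableOn f (Set.Ici 0)) {u : ℝ} (hu : u ≤ 0) :
    IntegrableOn (fun t => f (t + u)) (Set.Ici 0) ∧
      (∫ t in Set.Ici (0:ℝ), f (t + u)) = ∫ t in Set.Ici (0:ℝ), f t := by
  have hIco : IntegrableOn f (Set.Ico u 0) := by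
    rw [integrableOn_congr_fun (g := fun _ => (0:ℝ)) (fun x hx => h0 x hx.2) measurableSet_Ico]
    exact integrableOn_zero
  have hIu : IntegrableOn f (Set.Ici u) := by
    rw [← Set.Ico_union_Ici_eq_Ici hu]; exact hIco.union hint
  have hindEq : (fun t => (Set.Ici (0:ℝ)).indicator (fun t => f (t + u)) t)
      = fun t => (Set.Ici u).indicator f (t + u) := by
    funext t
    simp only [Set.indicator_apply, Set.mem_Ici]
    have hiff : (0:ℝ) ≤ t ↔ u ≤ t + u := by constructor <;> intro <;> linarith
    rw [if_congr hiff rfl rfl]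
  have hIndInt : Integrable ((Set.Ici u).indicator f) volume :=
    (integrable_indicator_iff measurableSet_Ici).mpr hIu
  have hdisj : Disjoint (Set.Ico u 0) (Set.Ici (0:ℝ)) :=
    Set.disjoint_left.mpr fun x hx hx' => (not_le.mpr hx.2) hx'
  constructor
  · have hcomp := hIndInt.comp_add_right u
    rw [← hindEq] at hcomp
    exact (integrable_indicator_iff measurableSet_Ici).mp hcomp
  · calc ∫ t in Set.Ici (0:ℝ), f (t + u)
        = ∫ t, (Set.Ici (0:ℝ)).indicator (fun t => f (t + u)) t :=
          (integral_indicator measurableSet_Ici).symm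
      _ = ∫ t, (Set.Ici u).indicator f (t + u) := by rw [hindEq]
      _ = ∫ t, (Set.Ici u).indicator f t := integral_add_right_eq_self _ u
      _ = ∫ t in Set.Ici u, f t := integral_indicator measurableSet_Ici
      _ = (∫ t in Set.Ico u 0, f t) + ∫ t in Set.Ici (0:ℝ), f t := by
          rw [← Set.Ico_union_Ici_eq_Ici hu, setIntegral_union hdisj measurableSet_Ici hIco hint]
      _ = ∫ t in Set.Ici (0:ℝ), f t := by
          rw [setIntegral_congr_fun (g := fun _ => (0:ℝ)) measurableSet_Ico
            (fun x hx => h0 x hx.2)]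
          simp

/-- Fubini for the convolution-type integral against a finite measure supported in `[-τ,0]`. -/
private lemma conv_int (τ : ℝ) (f : ℝ → ℝ) (hf : Measurable f) (h0 : ∀ t < (0:ℝ), f t = 0)
    (hint : IntegrableOn f (Set.Ici 0)) (ν : Measure ℝ) [IsFiniteMeasure ν] :
    IntegrableOn (fun t => ∫ u in Set.Icc (-τ) 0, f (t + u) ∂ν) (Set.Ici 0) ∧
      (∫ t in Set.Ici (0:ℝ), ∫ u in Set.Icc (-τ) 0, f (t + u) ∂ν)
        = (ν (Set.Icc (-τ) 0)).toReal * ∫ t in Set.Ici (0:ℝ), f t := by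
  have hmeasK : MeasurableSet (Set.Icc (-τ) (0:ℝ)) := measurableSet_Icc
  have haemem : ∀ᵐ u ∂(ν.restrict (Set.Icc (-τ) 0)), u ∈ Set.Icc (-τ) (0:ℝ) :=
    ae_restrict_mem hmeasK
  have hmeas2 : AEStronglyMeasurable (fun p : ℝ × ℝ => f (p.1 + p.2))
      ((volume.restrict (Set.Ici 0)).prod (ν.restrict (Set.Icc (-τ) 0))) :=
    (hf.comp measurable_add).aestronglyMeasurable
  have h0' : ∀ t < (0:ℝ), ‖f t‖ = 0 := fun t ht => by rw [h0 t ht, norm_zero]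
  have hprod : Integrable (fun p : ℝ × ℝ => f (p.1 + p.2))
      ((volume.restrict (Set.Ici 0)).prod (ν.restrict (Set.Icc (-τ) 0))) := by
    rw [integrable_prod_iff' hmeas2]
    constructor
    · filter_upwards [haemem] with u hu
      exact (shift_int f hf h0 hint hu.2).1
    · apply (integrable_const (∫ t in Set.Ici (0:ℝ), ‖f t‖)).congr
      filter_upwards [haemem] with u hu
      exact ((shift_int (fun t => ‖f t‖) hf.norm h0' hint.norm hu.2).2).symm
  constructor
  · exact hprod.integral_prod_left
  · have hswap := integral_integral_swap (f := fun x y => f (x + y))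
      (μ := volume.restrict (Set.Ici 0)) (ν := ν.restrict (Set.Icc (-τ) 0)) hprod
    rw [hswap, setIntegral_congr_fun hmeasK
      (fun u hu => (shift_int f hf h0 hint hu.2).2), setIntegral_const, smul_eq_mul]
    rfl

/-- If the resolvent `r_τ` of the functional differential equation associated with a finite
signed Borel measure `μ` on `[-τ,0]` is integrable on `[0,∞)`, then
`∫₀^∞ r_τ = -1/μ([-τ,0])` (in particular `μ([-τ,0]) ≠ 0`) and `∫₀^∞ r_τ' = -1`. -/
theorem stmt1 (τ : ℝ) (hτ : 0 < τ) (μ : MeasureTheory.SignedMeasure ℝ)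
    (hsupp : ∀ A : Set ℝ, A ∩ Set.Icc (-τ) 0 = ∅ → μ A = 0)
    (rτ : ℝ → ℝ) (hneg : ∀ t < (0:ℝ), rτ t = 0)
    (hr_cont : ContinuousOn rτ (Set.Ici 0))
    (hr0 : rτ 0 = 1)
    (hr_eq : ∀ t ≥ (0:ℝ),
      rτ t = 1 + ∫ s in (0:ℝ)..t, sInt μ (Set.Icc (-τ) 0) (fun u => rτ (s + u)))
    (hr_int : IntegrableOn rτ (Set.Ici 0)) :
    μ (Set.Icc (-τ) 0) ≠ 0 ∧
      (∫ s in Set.Ici (0:ℝ), rτ s) = -1 / μ (Set.Icc (-τ) 0) ∧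
      (∫ t in Set.Ici (0:ℝ), sInt μ (Set.Icc (-τ) 0) (fun u => rτ (t + u))) = -1 := by
  have hmeasK : MeasurableSet (Set.Icc (-τ) (0:ℝ)) := measurableSet_Icc
  -- measurability of rτ
  have hc : ∀ t : ℝ, t ≠ 0 → ContinuousAt rτ t := by
    intro t ht
    rcases ht.lt_or_gt with h | h
    · have heq : rτ =ᶠ[𝓝 t] fun _ => (0:ℝ) := by
        filter_upwards [Iio_mem_nhds h] with x hx using hneg x hx
      exact (continuousAt_congr heq).mpr continuousAt_const
    · exact hr_cont.continuousAt (Ici_mem_nhds h)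
  have hrmeas : Measurable rτ :=
    measurable_of_continuousOn_compl_singleton 0
      (fun t ht => (hc t (by simpa using ht)).continuousWithinAt)
  -- Jordan decomposition
  set ν₁ := μ.toJordanDecomposition.posPart with hν₁
  set ν₂ := μ.toJordanDecomposition.negPart with hν₂
  have hM : μ (Set.Icc (-τ) 0) = (ν₁ (Set.Icc (-τ) 0)).toReal - (ν₂ (Set.Icc (-τ) 0)).toReal := by
    conv_lhs => rw [← μ.toSignedMeasure_toJordanDecomposition]
    rw [JordanDecomposition.toSignedMeasure, VectorMeasure.sub_apply,
      Measure.toSignedMeasure_apply_measurable hmeasK,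
      Measure.toSignedMeasure_apply_measurable hmeasK]
    rfl
  have h1 := conv_int τ rτ hrmeas hneg hr_int ν₁
  have h2 := conv_int τ rτ hrmeas hneg hr_int ν₂
  set I := ∫ s in Set.Ici (0:ℝ), rτ s with hI
  set F := fun t => sInt μ (Set.Icc (-τ) 0) (fun u => rτ (t + u)) with hF
  have hFint : IntegrableOn F (Set.Ici 0) := by
    have := h1.1.sub h2.1
    simpa only [hF, sInt, Pi.sub_def] using this
  have hIF : (∫ t in Set.Ici (0:ℝ), F t) = μ (Set.Icc (-τ) 0) * I := by
    simp only [hF, sInt]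
    rw [integral_sub h1.1 h2.1, h1.2, h2.2, hM]
    ring
  -- limit of rτ at infinity
  have htend : Tendsto rτ atTop (𝓝 (1 + ∫ t in Set.Ici (0:ℝ), F t)) := by
    have h3 : Tendsto (fun b : ℝ => ∫ x in (0:ℝ)..b, F x) atTop
        (𝓝 (∫ t in Set.Ioi (0:ℝ), F t)) :=
      intervalIntegral_tendsto_integral_Ioi 0 (hFint.mono_set Ioi_subset_Ici_self) tendsto_id
    rw [integral_Ici_eq_integral_Ioi]
    have h4 : Tendsto (fun t : ℝ => 1 + ∫ x in (0:ℝ)..t, F x) atTop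
        (𝓝 (1 + ∫ t in Set.Ioi (0:ℝ), F t)) := tendsto_const_nhds.add h3
    apply h4.congr'
    filter_upwards [eventually_ge_atTop (0:ℝ)] with t ht using (hr_eq t ht).symm
  -- the limit must be zero
  set L := 1 + ∫ t in Set.Ici (0:ℝ), F t with hLdef
  have hL0 : L = 0 := by
    by_contra hL
    have hpos : 0 < |L| / 2 := by positivity
    obtain ⟨T, hT⟩ := (Metric.tendsto_atTop.mp htend (|L| / 2) hpos)
    set T' := max T 0 with hT'
    have hbound : ∀ t ∈ Set.Ici T', |L| / 2 ≤ |rτ t| := by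
      intro t ht
      have h5 := hT t (le_trans (le_max_left T 0) ht)
      rw [Real.dist_eq] at h5
      have : |L| - |rτ t - L| ≤ |rτ t| := by
        have := abs_sub_abs_le_abs_sub L (rτ t)
        have h6 : |L - rτ t| = |rτ t - L| := abs_sub_comm _ _
        linarith [abs_sub_abs_le_abs_sub L (rτ t), h6 ▸ (abs_sub_abs_le_abs_sub L (rτ t))]
      linarith
    have hrT : IntegrableOn rτ (Set.Ici T') :=
      hr_int.mono_set (Set.Ici_subset_Ici.mpr (le_max_right T 0))
    have hconst : Integrable (fun _ : ℝ => |L| / 2) (volume.restrict (Set.Ici T')) := by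
      apply Integrable.mono' hrT.norm
        (aestronglyMeasurable_const)
      filter_upwards [ae_restrict_mem (measurableSet_Ici (a := T'))] with t ht
      rw [Real.norm_eq_abs, abs_of_nonneg (le_of_lt hpos)]
      exact hbound t ht
    rcases integrable_const_iff.mp hconst with h | h
    · exact hL (by simpa using h)
    · have h := h.measure_univ_lt_top
      rw [Measure.restrict_apply_univ, Real.volume_Ici] at h
      exact (lt_irrefl _ h).elim
  have hMI : μ (Set.Icc (-τ) 0) * I = -1 := by
    have : (1 : ℝ) + μ (Set.Icc (-τ) 0) * I = 0 := by rw [← hIF]; exact hL0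
    linarith
  have hMne : μ (Set.Icc (-τ) 0) ≠ 0 := by
    intro h
    rw [h, zero_mul] at hMI
    norm_num at hMI
  refine ⟨hMne, ?_, ?_⟩
  · field_simp
    linarith [hMI]
  · rw [show (∫ t in Set.Ici (0:ℝ), sInt μ (Set.Icc (-τ) 0) (fun u => rτ (t + u)))
      = ∫ t in Set.Ici (0:ℝ), F t from rfl, hIF, hMI]
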